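/- Under the FIFO property, the concatenation of a fastest path from o to a fixed intermediate node k (departing at time t₀) with a fastest path from k to d (departing at the arrival time at k) is a fastest o–d path among all paths constrained to pass through k. -/
import Mathlib


/-- Arrival time of a list of arcs, composing `a ↦ a + τ i j a` along the path. -/
def arrival {N : Type*} (τ : N → N → ℝ → ℝ) : List (N × N) → ℝ → ℝ
  | [], s => s
  | (i, j) :: rest, s => arrival τ rest (s + τ i j s)

/-- `IsPath A u w p`: the list of arcs `p` is a directed path from `u` to `w`. -/
def IsPath {N : Type*} (A : N → N → Prop) : N → N → List (N × N) → Prop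
  | u, w, [] => u = w
  | u, w, (i, j) :: rest => i = u ∧ A i j ∧ IsPath A j w rest


lemma arrival_append {N : Type*} (τ : N → N → ℝ → ℝ) (p q : List (N × N)) (s : ℝ) :
    arrival τ (p ++ q) s = arrival τ q (arrival τ p s) := by
  induction p generalizing s with
  | nil => rfl
  | cons a rest ih => obtain ⟨i, j⟩ := a; simp [arrival, ih]

lemma arrival_mono {N : Type*} (τ : N → N → ℝ → ℝ)
    (hFIFO : ∀ i j s t, s ≤ t → s + τ i j s ≤ t + τ i j t)
    (p : List (N × N)) {s t : ℝ} (h : s ≤ t) : arrival τ p s ≤ arrival τ p t := by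
  induction p generalizing s t with
  | nil => exact h
  | cons a rest ih => obtain ⟨i, j⟩ := a; exact ih (hFIFO i j s t h)

/-- under FIFO, concatenating a fastest o–k path (departing at t₀) with a
fastest k–d path (departing at the arrival time at k) gives a fastest o–d path among
all paths constrained to pass through k. -/
theorem stmt_11 {N : Type*} (A : N → N → Prop) (τ : N → N → ℝ → ℝ)
    (hFIFO : ∀ i j s t, s ≤ t → s + τ i j s ≤ t + τ i j t)
    (o k d : N) (t0 : ℝ) (p1 p2 : List (N × N))
    (hp1 : IsPath A o k p1)
    (hp1opt : ∀ q, IsPath A o k q → arrival τ p1 t0 ≤ arrival τ q t0)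
    (hp2 : IsPath A k d p2)
    (hp2opt : ∀ q, IsPath A k d q →
      arrival τ p2 (arrival τ p1 t0) ≤ arrival τ q (arrival τ p1 t0)) :
    ∀ q1 q2, IsPath A o k q1 → IsPath A k d q2 →
      arrival τ (p1 ++ p2) t0 ≤ arrival τ (q1 ++ q2) t0 := by
  intro q1 q2 hq1 hq2
  rw [arrival_append, arrival_append]
  calc arrival τ p2 (arrival τ p1 t0) ≤ arrival τ q2 (arrival τ p1 t0) := hp2opt q2 hq2
    _ ≤ arrival τ q2 (arrival τ q1 t0) := arrival_mono τ hFIFO q2 (hp1opt q1 hq1)
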